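/- arXiv:2006.12222 — 2 statements merged into one kernel-verified Lean document; each statement's English description precedes it below -/
import Mathlib

section
/- With 𝒞_k defined by 𝒞_0(z) = 𝔠(z) and 𝒞_{k+1}(z) = [(𝔠(z) + y_k/z)𝒞_k(z)]_+, the evaluation x_1·𝒞_2(0) with y_0 = x_3, y_1 = x_2 equals the regular 3-loop polynomial x_1(1 − 2x_2)(1 − x_3), and x_1·𝒞_3(0) with y_0 = x_4, y_1 = x_3, y_2 = x_2 equals x_1(1 − 3x_2 − 2x_3 + 5x_2x_3)(1 − x_4). -/
/-!
Comparing coefficients in `z𝔠² + 𝔠 − 1 = 0` gives the Catalan recursion up to sign, so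
`𝔠 = ∑ (−1)ⁿ Catₙ zⁿ`. The recursion for `𝒞ₖ` reads coefficientwise as
`[zⁿ]𝒞ₖ₊₁ = ∑_{i+j=n} [zⁱ]𝔠 · [zʲ]𝒞ₖ + yₖ · [zⁿ⁺¹]𝒞ₖ`, so `𝒞ₖ(0)` only involves the coefficients
of `𝒞ₖ₋ⱼ` up to degree `j`. Here `𝒞₁ = 𝔠² + y₀ [𝔠/z]₊` has `[zⁿ]𝒞₁ = (1 − y₀)(−1)ⁿ Catₙ₊₁`, and
two more steps of the recursion give the constant terms of `𝒞₂` and `𝒞₃`.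
-/

/-- The nonnegative-degree part of z⁻¹·f: `plusDiv f = [f/z]_+`. -/
noncomputable def plusDiv {A : Type*} [CommRing A] (f : PowerSeries A) : PowerSeries A :=
  PowerSeries.mk fun n => PowerSeries.coeff (n + 1) f

open PowerSeries Finset

@[simp]
theorem coeff_plusDiv {A : Type*} [CommRing A] (n : ℕ) (f : A⟦X⟧) :
    coeff n (plusDiv f) = coeff (n + 1) f := by
  simp [plusDiv]

section Recursion

variable {A : Type*} [CommRing A] {c : A⟦X⟧}

theorem coeff_succ_eq_neg_sum_of_X_mul_sq_add_sub_one_eq_zero (hceq : X * c ^ 2 + c - 1 = 0)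
    (n : ℕ) : coeff (n + 1) c = -∑ p ∈ antidiagonal n, coeff p.1 c * coeff p.2 c := by
  have h := congrArg (coeff (n + 1)) hceq
  rw [map_sub, map_add, coeff_succ_X_mul, sq, coeff_mul, coeff_one, if_neg n.succ_ne_zero,
    map_zero] at h
  linear_combination h

theorem coeff_eq_neg_one_pow_mul_catalan (hceq : X * c ^ 2 + c - 1 = 0)
    (hc0 : constantCoeff c = 1) (n : ℕ) : coeff n c = (-1) ^ n * catalan n := by
  induction n using Nat.strong_induction_on with
  | _ n ih =>
  cases n with
  | zero => simp [hc0]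
  | succ n =>
    rw [coeff_succ_eq_neg_sum_of_X_mul_sq_add_sub_one_eq_zero hceq, catalan_succ', Nat.cast_sum,
      pow_succ, mul_comm _ (-1), mul_assoc, neg_one_mul, neg_inj, mul_sum]
    refine sum_congr rfl fun p hp => ?_
    rw [HasAntidiagonal.mem_antidiagonal] at hp
    rw [ih p.1 (by omega), ih p.2 (by omega), ← hp, pow_add]
    push_cast
    ring

variable {C : ℕ → A⟦X⟧} {y : ℕ → A}
  (hrec : ∀ k, C (k + 1) = c * C k + PowerSeries.C (y k) * plusDiv (C k))
include hrec

theorem coeff_succ_of_rec (k n : ℕ) : coeff n (C (k + 1)) =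
    ∑ p ∈ antidiagonal n, coeff p.1 c * coeff p.2 (C k) + y k * coeff (n + 1) (C k) := by
  rw [hrec, map_add, coeff_mul, coeff_C_mul, coeff_plusDiv]

variable (hceq : X * c ^ 2 + c - 1 = 0) (hc0 : constantCoeff c = 1) (hC0 : C 0 = c)
include hceq hc0 hC0

theorem coeff_one_of_rec (n : ℕ) :
    coeff n (C 1) = (1 - y 0) * ((-1) ^ n * catalan (n + 1)) := by
  rw [coeff_succ_of_rec hrec, hC0, ← neg_neg (∑ p ∈ _, _),
    ← coeff_succ_eq_neg_sum_of_X_mul_sq_add_sub_one_eq_zero hceq,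
    coeff_eq_neg_one_pow_mul_catalan hceq hc0]
  ring

theorem coeff_two_of_rec :
    constantCoeff (C 2) = (1 - y 0) * (1 - 2 * y 1) ∧
    coeff 1 (C 2) = (1 - y 0) * (-3 + 5 * y 1) := by
  have hcat := coeff_eq_neg_one_pow_mul_catalan hceq hc0
  have h1 := coeff_one_of_rec hrec hceq hc0 hC0 (y := y)
  simp only [← coeff_zero_eq_constantCoeff_apply, coeff_succ_of_rec hrec 1,
    Nat.sum_antidiagonal_succ, Nat.antidiagonal_zero, sum_singleton, hcat, h1, Nat.reduceAdd,
    catalan_zero, catalan_one, catalan_two, catalan_three]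
  constructor <;> push_cast <;> ring

theorem constantCoeff_three_of_rec :
    constantCoeff (C 3) = (1 - y 0) * (1 - 2 * y 1 - 3 * y 2 + 5 * y 1 * y 2) := by
  obtain ⟨h0, h1⟩ := coeff_two_of_rec hrec hceq hc0 hC0
  rw [← coeff_zero_eq_constantCoeff_apply, coeff_succ_of_rec hrec 2, Nat.antidiagonal_zero,
    sum_singleton, zero_add, coeff_zero_eq_constantCoeff_apply, coeff_zero_eq_constantCoeff_apply,
    h0, h1, hc0]
  ring

end Recursion

/-- With 𝒞₀(z) = 𝔠(z) and 𝒞_{k+1}(z) = [(𝔠(z) + y_k/z)𝒞_k(z)]_+, the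
reconstruction formula gives the regular loop polynomials:
x₁·𝒞₂(0)(y₀ = x₃, y₁ = x₂) = x₁(1 − 2x₂)(1 − x₃) and
x₁·𝒞₃(0)(y₀ = x₄, y₁ = x₃, y₂ = x₂) = x₁(1 − 3x₂ − 2x₃ + 5x₂x₃)(1 − x₄). -/
theorem generating_function_reconstruction
    (c : PowerSeries (MvPolynomial ℕ ℚ))
    (hceq : PowerSeries.X * c ^ 2 + c - 1 = 0)
    (hc0 : PowerSeries.constantCoeff c = 1)
    (C : ℕ → PowerSeries (MvPolynomial ℕ ℚ))
    (hC0 : C 0 = c)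
    (hrec : ∀ k : ℕ, C (k + 1) =
      c * C k + PowerSeries.C (MvPolynomial.X k : MvPolynomial ℕ ℚ) * plusDiv (C k)) :
    (∀ x1 x2 x3 : ℚ,
      x1 * MvPolynomial.eval (fun n => if n = 0 then x3 else if n = 1 then x2 else 0)
          (PowerSeries.constantCoeff (C 2)) =
        x1 * (1 - 2 * x2) * (1 - x3)) ∧
    (∀ x1 x2 x3 x4 : ℚ,
      x1 * MvPolynomial.eval
          (fun n => if n = 0 then x4 else if n = 1 then x3 else if n = 2 then x2 else 0)
          (PowerSeries.constantCoeff (C 3)) =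
        x1 * (1 - 3 * x2 - 2 * x3 + 5 * x2 * x3) * (1 - x4)) := by
  constructor
  · intro x1 x2 x3
    rw [(coeff_two_of_rec hrec hceq hc0 hC0).1]
    simp only [map_mul, map_sub, map_one, MvPolynomial.eval_X, MvPolynomial.eval_ofNat,
      ↓reduceIte, one_ne_zero]
    ring
  · intro x1 x2 x3 x4
    rw [constantCoeff_three_of_rec hrec hceq hc0 hC0]
    simp only [map_mul, map_sub, map_add, map_one, MvPolynomial.eval_X, MvPolynomial.eval_ofNat,
      ↓reduceIte, one_ne_zero, OfNat.ofNat_ne_zero, OfNat.ofNat_ne_one]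
    ring
end

section
/- For a multilinear polynomial Q in x_1,...,x_P satisfying Q|_{x_1=0} = 0 and Q|_{x_P=1} = 0 (P ≥ 2), the hole decomposition takes the form Q(x) = Σ_{j=1}^{P−2} x_1⋯x_j Q^o_{j+1}(x) + x_1⋯x_{P−1}(1 − x_P)·Q^o_P; in particular Q^o_1 = 0 and Q^o_{P+1} = −Q^o_P. -/
open MvPolynomial

/-- The string of derivatives `derivs R P k Q = ∂_{x_k} ⋯ ∂_{x_1} Q`. -/
noncomputable def derivs (R : Type) [CommRing R] (P : ℕ) :
    ℕ → MvPolynomial (Fin P) R → MvPolynomial (Fin P) R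
  | 0, Q => Q
  | k + 1, Q =>
      if h : k < P then pderiv (⟨k, h⟩ : Fin P) (derivs R P k Q) else derivs R P k Q

/-- Substitute `0` for the variable of index `k`. -/
noncomputable def evalZeroAt (R : Type) [CommRing R] (P k : ℕ)
    (Q : MvPolynomial (Fin P) R) : MvPolynomial (Fin P) R :=
  aeval (fun i : Fin P => if (i : ℕ) = k then 0 else X i) Q

/-- The hole coefficient `Q^o_{j+1} = (∂_{x_j} ⋯ ∂_{x_1} Q)|_{x_{j+1} = 0}`. -/
noncomputable def hole (R : Type) [CommRing R] (P j : ℕ)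
    (Q : MvPolynomial (Fin P) R) : MvPolynomial (Fin P) R :=
  evalZeroAt R P j (derivs R P j Q)

section Aux
variable {R : Type} [CommRing R] {P : ℕ}

lemma decomp (i : Fin P) (q : MvPolynomial (Fin P) R) (hq : q.degreeOf i ≤ 1) :
    q = evalZeroAt R P i q + X i * pderiv i q := by
  unfold evalZeroAt
  conv_rhs => rw [q.as_sum, map_sum, map_sum, Finset.mul_sum, ← Finset.sum_add_distrib]
  conv_lhs => rw [q.as_sum]
  apply Finset.sum_congr rfl
  intro d hd
  have hdi : d i ≤ 1 := (degreeOf_le_iff.mp hq) d hd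
  rcases Nat.le_one_iff_eq_zero_or_eq_one.mp hdi with h0 | h1
  · rw [pderiv_monomial, h0, Nat.cast_zero, mul_zero, map_zero, mul_zero, add_zero,
      aeval_monomial, monomial_eq]
    congr 1
    apply Finsupp.prod_congr
    intro l hl
    have hne : l ≠ i := by
      intro h; rw [h] at hl; simp [Finsupp.mem_support_iff, h0] at hl
    rw [if_neg (by simpa [Fin.val_eq_val] using hne)]
  · rw [aeval_monomial, Finsupp.prod,
      Finset.prod_eq_zero (i := i) (by simp [Finsupp.mem_support_iff, h1]) (by simp [h1]),
      mul_zero, zero_add, pderiv_monomial, h1, Nat.cast_one, mul_one,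
      X, monomial_mul, one_mul]
    have hds : Finsupp.single i 1 + (d - Finsupp.single i 1) = d := by
      ext l
      simp only [Finsupp.add_apply, Finsupp.tsub_apply, Finsupp.single_apply]
      rcases eq_or_ne i l with rfl | hne
      · simp [h1]
      · simp [hne]
    rw [hds]

end Aux

section Aux2
variable {R : Type} [CommRing R] {P : ℕ}

lemma mem_support_pderiv {i : Fin P} {q : MvPolynomial (Fin P) R} {m : Fin P →₀ ℕ}
    (hm : m ∈ (pderiv i q).support) :
    ∃ d ∈ q.support, m = d - Finsupp.single i 1 := by
  classical
  rw [q.as_sum, map_sum] at hm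
  obtain ⟨d, hd, hmd⟩ := Finset.mem_biUnion.mp (MvPolynomial.support_sum hm)
  rw [pderiv_monomial] at hmd
  refine ⟨d, hd, ?_⟩
  have := support_monomial_subset hmd
  simpa using this

lemma degreeOf_pderiv_le (l i : Fin P) (q : MvPolynomial (Fin P) R) :
    (pderiv i q).degreeOf l ≤ q.degreeOf l := by
  rw [degreeOf_le_iff]
  intro m hm
  obtain ⟨d, hd, rfl⟩ := mem_support_pderiv hm
  refine le_trans ?_ ((degreeOf_le_iff.mp le_rfl) d hd)
  simp only [Finsupp.tsub_apply]
  omega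

lemma degreeOf_pderiv_self {i : Fin P} {q : MvPolynomial (Fin P) R}
    (h : q.degreeOf i ≤ 1) : (pderiv i q).degreeOf i = 0 := by
  refine Nat.le_zero.mp ?_
  rw [degreeOf_le_iff]
  intro m hm
  obtain ⟨d, hd, rfl⟩ := mem_support_pderiv hm
  have : d i ≤ 1 := (degreeOf_le_iff.mp h) d hd
  simp [Finsupp.tsub_apply, Finsupp.single_apply]
  omega

lemma degreeOf_derivs_le (l : Fin P) (k : ℕ) (q : MvPolynomial (Fin P) R) :
    (derivs R P k q).degreeOf l ≤ q.degreeOf l := by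
  induction k with
  | zero => simp [derivs]
  | succ k ih =>
    rw [derivs]
    split
    · exact (degreeOf_pderiv_le _ _ _).trans ih
    · exact ih

end Aux2

section Aux3
variable {R : Type} [CommRing R] {P : ℕ}

lemma notMem_vars_of_degreeOf {q : MvPolynomial (Fin P) R} {i : Fin P}
    (h : q.degreeOf i = 0) : i ∉ q.vars := by
  intro hv
  obtain ⟨d, hd, hid⟩ := (mem_vars i).mp hv
  have h1 : d i ≤ 0 := degreeOf_le_iff.mp h.le d hd
  exact absurd (Finsupp.mem_support_iff.mp hid) (by omega)

lemma aeval_subst_self {k : ℕ} (t : MvPolynomial (Fin P) R) (q : MvPolynomial (Fin P) R)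
    (h : ∀ j : Fin P, (j : ℕ) = k → q.degreeOf j = 0) :
    aeval (fun i : Fin P => if (i : ℕ) = k then t else X i) q = q := by
  have hv : ∀ i ∈ q.vars, (if (i : ℕ) = k then t else X i) = X i := by
    intro i hi
    rw [if_neg]
    intro hik
    exact notMem_vars_of_degreeOf (h i hik) hi
  have h2 := eval₂Hom_congr' (f₁ := algebraMap R (MvPolynomial (Fin P) R))
    (g₁ := fun i : Fin P => if (i : ℕ) = k then t else X i) (g₂ := X)
    (p₁ := q) (p₂ := q) rfl (fun i hi _ => hv i hi) rfl
  simpa [aeval_def] using h2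

lemma degreeOf_aeval_eq_zero (j : Fin P) (g : Fin P → MvPolynomial (Fin P) R)
    (hg : ∀ i, (g i).degreeOf j = 0) (q : MvPolynomial (Fin P) R) :
    (aeval g q).degreeOf j = 0 := by
  induction q using MvPolynomial.induction_on with
  | C a => simp [degreeOf_C]
  | add p r hp hr =>
    rw [map_add]
    have h := degreeOf_add_le j (aeval g p) (aeval g r)
    rw [hp, hr] at h
    omega
  | mul_X p i hp =>
    rw [map_mul, aeval_X]
    have h := degreeOf_mul_le j (aeval g p) (g i)
    rw [hp, hg i] at h
    omega

lemma pderiv_aeval_comm (j : Fin P) (g : Fin P → MvPolynomial (Fin P) R)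
    (hg : ∀ i, pderiv j (g i) = if i = j then 1 else 0) (q : MvPolynomial (Fin P) R) :
    pderiv j (aeval g q) = aeval g (pderiv j q) := by
  classical
  induction q using MvPolynomial.induction_on with
  | C a => simp [pderiv_C]
  | add p r hp hr => simp only [map_add, hp, hr]
  | mul_X p i hp =>
    by_cases h : i = j
    · subst h
      simp only [map_mul, map_add, aeval_X, pderiv_mul, hp, hg, pderiv_X_self,
        map_one, mul_one, if_true, eq_self_iff_true]
    · simp only [map_mul, map_add, aeval_X, pderiv_mul, hp, hg, pderiv_X_of_ne h,
        mul_zero, add_zero, map_zero, if_neg h]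

lemma derivs_aeval_comm (hP : 1 ≤ P) (k : ℕ) (hk : k ≤ P - 1)
    (q : MvPolynomial (Fin P) R) :
    derivs R P k (aeval (fun i : Fin P =>
        if (i : ℕ) = P - 1 then (1 : MvPolynomial (Fin P) R) else X i) q)
      = aeval (fun i : Fin P => if (i : ℕ) = P - 1 then 1 else X i) (derivs R P k q) := by
  induction k with
  | zero => simp [derivs]
  | succ k ih =>
    rw [derivs, derivs, ih (by omega)]
    split
    case isTrue h =>
      rw [pderiv_aeval_comm]
      intro i
      rcases eq_or_ne ((i : ℕ)) (P - 1) with he | hne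
      · rw [if_pos he, if_neg]
        · exact pderiv_one
        · intro hij
          rw [hij] at he
          simp at he
          omega
      · rw [if_neg hne]
        simp [pderiv_X, Pi.single_apply]
    case isFalse => rfl

end Aux3

section Main
variable {R : Type} [CommRing R] {P : ℕ}

lemma derivs_zero (k : ℕ) : derivs R P k 0 = 0 := by
  induction k with
  | zero => simp [derivs]
  | succ k ih => rw [derivs]; split <;> simp [ih]

lemma prod_lt_succ (k : ℕ) (hk : k < P) :
    (∏ i ∈ Finset.univ.filter (fun i : Fin P => (i : ℕ) < k + 1), (X i : MvPolynomial (Fin P) R))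
      = (∏ i ∈ Finset.univ.filter (fun i : Fin P => (i : ℕ) < k), X i) * X ⟨k, hk⟩ := by
  classical
  have hins : Finset.univ.filter (fun i : Fin P => (i : ℕ) < k + 1)
      = insert (⟨k, hk⟩ : Fin P) (Finset.univ.filter (fun i : Fin P => (i : ℕ) < k)) := by
    ext i
    simp only [Finset.mem_filter, Finset.mem_insert, Finset.mem_univ, true_and, Fin.ext_iff]
    omega
  rw [hins, Finset.prod_insert (by simp), mul_comm]

lemma main_decomp (q : MvPolynomial (Fin P) R) (hq : ∀ i : Fin P, q.degreeOf i ≤ 1)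
    (k : ℕ) (hk : k ≤ P) :
    q = (∑ j ∈ Finset.range k,
          (∏ i ∈ Finset.univ.filter (fun i : Fin P => (i : ℕ) < j), X i) * hole R P j q)
      + (∏ i ∈ Finset.univ.filter (fun i : Fin P => (i : ℕ) < k), X i) * derivs R P k q := by
  induction k with
  | zero =>
    have he : Finset.univ.filter (fun i : Fin P => (i : ℕ) < 0) = ∅ := by
      ext i; simp
    simp [derivs, he]
  | succ k ih =>
    have hkP : k < P := hk
    have h1 : derivs R P (k + 1) q = pderiv ⟨k, hkP⟩ (derivs R P k q) := by
      rw [derivs, dif_pos hkP]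
    have hD : (derivs R P k q).degreeOf ⟨k, hkP⟩ ≤ 1 :=
      (degreeOf_derivs_le _ _ _).trans (hq _)
    have h2 := decomp ⟨k, hkP⟩ (derivs R P k q) hD
    rw [Finset.sum_range_succ, prod_lt_succ k hkP, h1]
    conv_lhs => rw [ih (by omega), h2]
    show _ = _ + _ * hole R P k q + _
    rw [hole]
    ring

end Main

/-- For a multilinear polynomial Q in x₁,…,x_P (P ≥ 2) with Q|_{x₁=0} = 0 and
Q|_{x_P=1} = 0, the hole decomposition takes the form
Q = Σ_{j=1}^{P−2} x₁⋯x_j Q^o_{j+1} + x₁⋯x_{P−1}(1 − x_P)·Q^o_P, and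
Q^o_1 = 0 and Q^o_{P+1} = −Q^o_P. -/
theorem hole_decomposition_with_boundary (R : Type) [CommRing R] (P : ℕ) (hP : 2 ≤ P)
    (Q : MvPolynomial (Fin P) R) (hQ : ∀ i : Fin P, Q.degreeOf i ≤ 1)
    (hb0 : evalZeroAt R P 0 Q = 0)
    (hb1 : aeval (fun i : Fin P =>
        if (i : ℕ) = P - 1 then 1 else (X i : MvPolynomial (Fin P) R)) Q = 0) :
    (Q = (∑ j ∈ Finset.Icc 1 (P - 2),
        (∏ i ∈ Finset.univ.filter (fun i : Fin P => (i : ℕ) < j), X i) * hole R P j Q)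
      + (∏ i ∈ Finset.univ.filter (fun i : Fin P => (i : ℕ) < P - 1), X i) *
          (1 - X (⟨P - 1, by omega⟩ : Fin P)) * hole R P (P - 1) Q) ∧
    hole R P 0 Q = 0 ∧
    hole R P P Q = -hole R P (P - 1) Q := by
  have hP1 : P - 1 < P := by omega
  set j : Fin P := ⟨P - 1, hP1⟩ with hj
  set D : MvPolynomial (Fin P) R := derivs R P (P - 1) Q with hD
  -- basic facts
  have h0 : hole R P 0 Q = 0 := hb0
  have hDdeg : D.degreeOf j ≤ 1 := (degreeOf_derivs_le _ _ _).trans (hQ _)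
  have hder : derivs R P P Q = pderiv j D := by
    have := (by rw [derivs, dif_pos hP1] :
      derivs R P ((P - 1) + 1) Q = pderiv ⟨P - 1, hP1⟩ (derivs R P (P - 1) Q))
    rwa [show P - 1 + 1 = P from by omega] at this
  have hpd0 : (pderiv j D).degreeOf j = 0 := degreeOf_pderiv_self hDdeg
  have hhole0 : (hole R P (P - 1) Q).degreeOf j = 0 := by
    rw [hole, evalZeroAt]
    apply degreeOf_aeval_eq_zero
    intro i
    split
    case isTrue => simp
    case isFalse h =>
      refine Nat.le_zero.mp ?_
      rw [degreeOf_le_iff]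
      intro m hm
      have hm' : m ∈ ((monomial (Finsupp.single i 1)) (1 : R)).support := by rwa [X] at hm
      have hms := support_monomial_subset hm'
      rw [Finset.mem_singleton] at hms
      subst hms
      rw [Finsupp.single_apply, if_neg (by simp only [hj, Fin.ext_iff, Fin.val_mk]; omega)]
  -- the substitution x_{P-1} = 1 kills D's decomposition sum
  have hsub : aeval (fun i : Fin P =>
      if (i : ℕ) = P - 1 then 1 else (X i : MvPolynomial (Fin P) R)) D = 0 := by
    rw [hD, ← derivs_aeval_comm (by omega) (P - 1) le_rfl, hb1, derivs_zero]
  have hdec := decomp j D hDdeg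
  have hkey : (0 : MvPolynomial (Fin P) R) = hole R P (P - 1) Q + pderiv j D := by
    have happ := congrArg (aeval (fun i : Fin P =>
      if (i : ℕ) = P - 1 then 1 else (X i : MvPolynomial (Fin P) R))) hdec
    rw [hsub, map_add, map_mul, aeval_X] at happ
    have e1 : (if ((j : Fin P) : ℕ) = P - 1 then (1 : MvPolynomial (Fin P) R) else X j) = 1 := by
      rw [if_pos rfl]
    rw [e1, one_mul] at happ
    have e2 : aeval (fun i : Fin P =>
        if (i : ℕ) = P - 1 then (1 : MvPolynomial (Fin P) R) else X i)
        (evalZeroAt R P (↑j) D) = hole R P (P - 1) Q := by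
      have : evalZeroAt R P (↑j) D = hole R P (P - 1) Q := rfl
      rw [this]
      exact aeval_subst_self _ _ (fun l hl => by
        have : l = j := by rw [hj]; exact Fin.ext hl
        rw [this]; exact hhole0)
    have e3 : aeval (fun i : Fin P =>
        if (i : ℕ) = P - 1 then (1 : MvPolynomial (Fin P) R) else X i)
        (pderiv j D) = pderiv j D :=
      aeval_subst_self _ _ (fun l hl => by
        have : l = j := by rw [hj]; exact Fin.ext hl
        rw [this]; exact hpd0)
    rw [e2, e3] at happ
    exact happ
  have hPP : hole R P P Q = derivs R P P Q := by
    rw [hole, evalZeroAt]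
    refine aeval_subst_self _ _ (fun l hl => ?_)
    exact absurd hl (by have := l.isLt; omega)
  have hneg : hole R P P Q = -hole R P (P - 1) Q := by
    rw [hPP, hder]
    exact eq_neg_of_add_eq_zero_right hkey.symm
  refine ⟨?_, h0, hneg⟩
  have hmain := main_decomp Q hQ P le_rfl
  have hins : Finset.range P = insert (P - 1) (insert 0 (Finset.Icc 1 (P - 2))) := by
    ext x
    simp only [Finset.mem_range, Finset.mem_insert, Finset.mem_Icc]
    omega
  rw [hins, Finset.sum_insert (by simp only [Finset.mem_insert, Finset.mem_Icc]; omega),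
    Finset.sum_insert (by simp), h0, mul_zero] at hmain
  have hprod : (∏ i ∈ Finset.univ.filter (fun i : Fin P => (i : ℕ) < P),
        (X i : MvPolynomial (Fin P) R))
      = (∏ i ∈ Finset.univ.filter (fun i : Fin P => (i : ℕ) < P - 1), X i) * X j := by
    have := prod_lt_succ (R := R) (P - 1) hP1
    rwa [show P - 1 + 1 = P from by omega] at this
  have hderneg : derivs R P P Q = -hole R P (P - 1) Q := by rw [← hPP]; exact hneg
  rw [hprod, hderneg] at hmain
  conv_lhs => rw [hmain]
  ring
end
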